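/- Let n ≥ 2, let E be the Euclidean space ℝ^{n−2}, and for each integer m ≥ 1 define F_m : ℂ × E → ℂ × E by F_m(z, y) = (g_m(z), y), where g_m is the winding mapping of order m (this is the mapping (r cos φ, r sin φ, x₃, …, x_n) ↦ (r cos mφ, r sin mφ, x₃, …, x_n) of ℝⁿ). Then each F_m is continuous, fixes the origin, and maps the closed unit ball B̄ = {(z, y) : |z|² + ‖y‖² ≤ 1} onto itself, yet the family {F_m}_{m=1}^∞ is not equicontinuous at any point (z₀, y₀) of the unit sphere {(z, y) : |z|² + ‖y‖² = 1} with z₀ ≠ 0. -/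

import Mathlib

/-- The winding mapping of order `m`: in polar coordinates `z = r e^{iφ}`,
`g_m(z) = r e^{imφ}`, i.e. `g_m(z) = |z| (z/|z|)^m` for `z ≠ 0` and `g_m(0) = 0`. -/
noncomputable def winding (m : ℕ) (z : ℂ) : ℂ :=
  if z = 0 then 0 else (‖z‖ : ℂ) * (z / (‖z‖ : ℂ)) ^ m

/-!
`g_m` multiplies the argument by `m` and keeps the modulus. Rotating a point `z₀` by the
small angle `π / m` therefore moves it by at most `π |z₀| / m`, while its image under `g_m`
is rotated by `π`, i.e. lands at `-g_m(z₀)`, at distance `2 |z₀|`. Keeping the last `n - 2`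
coordinates fixed, this rules out equicontinuity at every point with `z₀ ≠ 0`.
-/

section Winding

open Complex Filter Real

lemma winding_zero (m : ℕ) : winding m 0 = 0 := if_pos rfl

lemma winding_of_ne_zero (m : ℕ) {z : ℂ} (hz : z ≠ 0) :
    winding m z = (‖z‖ : ℂ) * (z / (‖z‖ : ℂ)) ^ m :=
  if_neg hz

lemma norm_winding (m : ℕ) (z : ℂ) : ‖winding m z‖ = ‖z‖ := by
  rcases eq_or_ne z 0 with rfl | hz
  · simp [winding_zero]
  · have hnorm : ‖z‖ ≠ 0 := norm_ne_zero_iff.mpr hz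
    simp [winding_of_ne_zero m hz, hnorm]

lemma continuous_winding (m : ℕ) : Continuous (winding m) := by
  refine continuous_iff_continuousAt.mpr fun z ↦ ?_
  rcases eq_or_ne z 0 with rfl | hz
  · rw [ContinuousAt, winding_zero, tendsto_zero_iff_norm_tendsto_zero]
    simpa only [norm_winding, norm_zero] using (continuous_norm (E := ℂ)).tendsto 0
  · have hnorm : ContinuousAt (fun w : ℂ ↦ (‖w‖ : ℂ)) z :=
      (continuous_ofReal.comp continuous_norm).continuousAt
    have hformula : (fun w : ℂ ↦ (‖w‖ : ℂ) * (w / (‖w‖ : ℂ)) ^ m) =ᶠ[nhds z] winding m := by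
      filter_upwards [isOpen_compl_singleton.mem_nhds hz] with w hw
      exact (winding_of_ne_zero m hw).symm
    exact (hnorm.mul ((continuousAt_id.div hnorm (by simpa using hz)).pow m)).congr hformula

lemma winding_ofReal_of_nonneg (m : ℕ) {r : ℝ} (hr : 0 ≤ r) : winding m r = r := by
  rcases hr.eq_or_lt with rfl | hr
  · simpa using winding_zero m
  · have hr' : (r : ℂ) ≠ 0 := ofReal_ne_zero.mpr hr.ne'
    simp [winding_of_ne_zero m hr', abs_of_pos hr, hr']

lemma norm_mul_exp_ofReal_mul_I (z : ℂ) (θ : ℝ) : ‖z * exp (θ * I)‖ = ‖z‖ := by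
  rw [norm_mul, norm_exp_ofReal_mul_I, mul_one]

lemma winding_mul_exp (m : ℕ) (z : ℂ) (θ : ℝ) :
    winding m (z * exp (θ * I)) = winding m z * exp ((m * θ : ℝ) * I) := by
  rcases eq_or_ne z 0 with rfl | hz
  · simp [winding_zero]
  have hzθ : z * exp (θ * I) ≠ 0 := mul_ne_zero hz (exp_ne_zero _)
  rw [winding_of_ne_zero m hzθ, winding_of_ne_zero m hz, norm_mul_exp_ofReal_mul_I,
    mul_div_right_comm, mul_pow, ← Complex.exp_nat_mul, ofReal_mul, ofReal_natCast, mul_assoc,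
    mul_assoc]

lemma exists_norm_eq_winding_eq {m : ℕ} (hm : m ≠ 0) (w : ℂ) :
    ∃ z : ℂ, ‖z‖ = ‖w‖ ∧ winding m z = w := by
  refine ⟨‖w‖ * exp ((w.arg / m : ℝ) * I), ?_, ?_⟩
  · rw [norm_mul_exp_ofReal_mul_I, norm_real, norm_norm]
  · rw [winding_mul_exp, winding_ofReal_of_nonneg m (norm_nonneg w),
      mul_div_cancel₀ _ (Nat.cast_ne_zero.mpr hm), norm_mul_exp_arg_mul_I]

lemma winding_mul_exp_pi_div {m : ℕ} (hm : m ≠ 0) (z : ℂ) :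
    winding m (z * exp ((π / m : ℝ) * I)) = -winding m z := by
  rw [winding_mul_exp, mul_div_cancel₀ _ (Nat.cast_ne_zero.mpr hm), exp_pi_mul_I, mul_neg_one]

lemma norm_mul_exp_sub_self_le (z : ℂ) (θ : ℝ) : ‖z * exp (θ * I) - z‖ ≤ ‖z‖ * |θ| := by
  rw [← mul_sub_one, norm_mul, mul_comm (θ : ℂ)]
  exact mul_le_mul_of_nonneg_left norm_exp_I_mul_ofReal_sub_one_le (norm_nonneg z)

lemma exists_winding_eq_neg_of_dist_lt (z₀ : ℂ) {δ : ℝ} (hδ : 0 < δ) :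
    ∃ m : ℕ, 1 ≤ m ∧ ∃ z : ℂ, ‖z‖ = ‖z₀‖ ∧ ‖z - z₀‖ < δ ∧ winding m z = -winding m z₀ := by
  obtain ⟨m, hmδ, hm⟩ :=
    (((tendsto_const_div_atTop_nhds_zero_nat (π * ‖z₀‖)).eventually (gt_mem_nhds hδ)).and
      (eventually_ge_atTop 1)).exists
  have hm0 : m ≠ 0 := Nat.one_le_iff_ne_zero.mp hm
  refine ⟨m, hm, z₀ * exp ((π / m : ℝ) * I), norm_mul_exp_ofReal_mul_I _ _, ?_,
    winding_mul_exp_pi_div hm0 z₀⟩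
  calc ‖z₀ * exp ((π / m : ℝ) * I) - z₀‖ ≤ ‖z₀‖ * |π / m| := norm_mul_exp_sub_self_le _ _
    _ = π * ‖z₀‖ / m := by rw [abs_of_nonneg (by positivity)]; ring
    _ < δ := hmδ

end Winding

lemma image_winding_prod_setOf {E : Type*} {m : ℕ} (hm : m ≠ 0) (P : ℝ → E → Prop) :
    (fun p : ℂ × E ↦ (winding m p.1, p.2)) '' {p | P ‖p.1‖ p.2} = {p | P ‖p.1‖ p.2} := by
  ext ⟨w, y⟩
  constructor
  · rintro ⟨⟨z, y'⟩, hzy, hw⟩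
    simp only [Prod.mk.injEq] at hw
    obtain ⟨rfl, rfl⟩ := hw
    simpa [norm_winding] using hzy
  · intro hwy
    obtain ⟨z, hz, rfl⟩ := exists_norm_eq_winding_eq hm w
    exact ⟨(z, y), by simpa [hz] using hwy, rfl⟩

theorem winding_space_family_not_equicontinuous_general (n : ℕ) :
    (∀ m : ℕ, 1 ≤ m →
      Continuous (fun p : ℂ × EuclideanSpace ℝ (Fin (n - 2)) => (winding m p.1, p.2))) ∧
    (∀ m : ℕ, 1 ≤ m →
      (fun p : ℂ × EuclideanSpace ℝ (Fin (n - 2)) => (winding m p.1, p.2))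
        ((0 : ℂ), (0 : EuclideanSpace ℝ (Fin (n - 2)))) = (0, 0)) ∧
    (∀ m : ℕ, 1 ≤ m →
      (fun p : ℂ × EuclideanSpace ℝ (Fin (n - 2)) => (winding m p.1, p.2)) ''
          {p : ℂ × EuclideanSpace ℝ (Fin (n - 2)) |
            ‖p.1‖ ^ 2 + ‖p.2‖ ^ 2 ≤ 1} =
        {p : ℂ × EuclideanSpace ℝ (Fin (n - 2)) |
          ‖p.1‖ ^ 2 + ‖p.2‖ ^ 2 ≤ 1}) ∧
    (∀ z₀ : ℂ, ∀ y₀ : EuclideanSpace ℝ (Fin (n - 2)),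
      ‖z₀‖ ^ 2 + ‖y₀‖ ^ 2 = 1 → z₀ ≠ 0 →
      ∃ ε₀ > (0 : ℝ), ∀ δ > (0 : ℝ), ∃ m : ℕ, 1 ≤ m ∧
        ∃ z : ℂ, ∃ y : EuclideanSpace ℝ (Fin (n - 2)),
          ‖z‖ ^ 2 + ‖y‖ ^ 2 ≤ 1 ∧
          Real.sqrt (‖z - z₀‖ ^ 2 + ‖y - y₀‖ ^ 2) < δ ∧
          ε₀ ≤ Real.sqrt (‖winding m z - winding m z₀‖ ^ 2 + ‖y - y₀‖ ^ 2)) := by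
  refine ⟨fun m _ ↦ ((continuous_winding m).comp continuous_fst).prodMk continuous_snd,
    fun m _ ↦ by simp [winding_zero],
    fun m hm ↦ image_winding_prod_setOf (Nat.one_le_iff_ne_zero.mp hm)
      fun r y ↦ r ^ 2 + ‖y‖ ^ 2 ≤ 1, ?_⟩
  intro z₀ y₀ hsphere hz₀
  refine ⟨2 * ‖z₀‖, by positivity, fun δ hδ ↦ ?_⟩
  obtain ⟨m, hm, z, hz, hzδ, hwz⟩ := exists_winding_eq_neg_of_dist_lt z₀ hδ
  refine ⟨m, hm, z, y₀, by rw [hz, hsphere], ?_, ?_⟩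
  · simpa [Real.sqrt_sq (norm_nonneg _)] using hzδ
  · have hantipodal : ‖-winding m z₀ - winding m z₀‖ = 2 * ‖z₀‖ := by
      rw [← neg_add', norm_neg, ← two_mul, norm_mul, norm_winding, Complex.norm_two]
    simp [hwz, hantipodal, Real.sqrt_sq (by positivity : (0 : ℝ) ≤ 2 * ‖z₀‖)]

/-- For `n ≥ 2`, identify `ℝⁿ` with `ℂ × ℝ^{n-2}` and define
`F_m(z, y) = (g_m(z), y)` (that is,
`(r cos φ, r sin φ, x₃, …, x_n) ↦ (r cos mφ, r sin mφ, x₃, …, x_n)`). Each `F_m`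
(`m ≥ 1`) is continuous, fixes the origin, and maps the closed unit ball
`{(z, y) : |z|² + ‖y‖² ≤ 1}` onto itself, yet the family `{F_m}` is not
equicontinuous (with respect to the Euclidean distance
`√(|z - z'|² + ‖y - y'‖²)`) at any point `(z₀, y₀)` of the unit sphere with
`z₀ ≠ 0`. -/
theorem winding_space_family_not_equicontinuous (n : ℕ) (hn : 2 ≤ n) :
    (∀ m : ℕ, 1 ≤ m →
      Continuous (fun p : ℂ × EuclideanSpace ℝ (Fin (n - 2)) => (winding m p.1, p.2))) ∧
    (∀ m : ℕ, 1 ≤ m →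
      (fun p : ℂ × EuclideanSpace ℝ (Fin (n - 2)) => (winding m p.1, p.2))
        ((0 : ℂ), (0 : EuclideanSpace ℝ (Fin (n - 2)))) = (0, 0)) ∧
    (∀ m : ℕ, 1 ≤ m →
      (fun p : ℂ × EuclideanSpace ℝ (Fin (n - 2)) => (winding m p.1, p.2)) ''
          {p : ℂ × EuclideanSpace ℝ (Fin (n - 2)) |
            ‖p.1‖ ^ 2 + ‖p.2‖ ^ 2 ≤ 1} =
        {p : ℂ × EuclideanSpace ℝ (Fin (n - 2)) |
          ‖p.1‖ ^ 2 + ‖p.2‖ ^ 2 ≤ 1}) ∧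
    (∀ z₀ : ℂ, ∀ y₀ : EuclideanSpace ℝ (Fin (n - 2)),
      ‖z₀‖ ^ 2 + ‖y₀‖ ^ 2 = 1 → z₀ ≠ 0 →
      ∃ ε₀ > (0 : ℝ), ∀ δ > (0 : ℝ), ∃ m : ℕ, 1 ≤ m ∧
        ∃ z : ℂ, ∃ y : EuclideanSpace ℝ (Fin (n - 2)),
          ‖z‖ ^ 2 + ‖y‖ ^ 2 ≤ 1 ∧
          Real.sqrt (‖z - z₀‖ ^ 2 + ‖y - y₀‖ ^ 2) < δ ∧
          ε₀ ≤ Real.sqrt (‖winding m z - winding m z₀‖ ^ 2 + ‖y - y₀‖ ^ 2)) :=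
  winding_space_family_not_equicontinuous_general n
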